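/- arXiv:1911.10303 — 5 statements merged into one kernel-verified Lean document; each statement's English description precedes it below -/
import Mathlib

section
/- Let M = 2^m and N = 2^n with n ≤ m, and let d ∈ {0,...,M/N−1}. Given a block of N complex numbers x[0],...,x[N−1], define the frequency vector X of length M by setting X[d + i·(M/N)] = (DFT_N x)[i] for i = 0,...,N−1 and X[k] = 0 for all other k. Then the M-point inverse DFT of X satisfies x'[ℓ] = (N/M)·e^{2πiℓd/M}·x[ℓ mod N] for every ℓ ∈ {0,...,M−1}. -/
open Complex Finset

/-- `dft N x k = Σ_{j<N} x j · e^{-2πi k j / N}` -/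
noncomputable def dft (N : ℕ) (x : ℕ → ℂ) (k : ℕ) : ℂ :=
  ∑ j ∈ Finset.range N, x j * Complex.exp (-2 * Real.pi * Complex.I * k * j / N)

/-- `idft M X ℓ = (1/M) Σ_{k<M} X k · e^{2πi k ℓ / M}` -/
noncomputable def idft (M : ℕ) (X : ℕ → ℂ) (ℓ : ℕ) : ℂ :=
  (1 / (M : ℂ)) * ∑ k ∈ Finset.range M, X k * Complex.exp (2 * Real.pi * Complex.I * k * ℓ / M)

/-!
Write `M = N * Q`. The spectrum `X` lives on the residue class `d + Q ℕ`, so the inverse DFT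
collapses to `N` terms, `(1 / M) Σ_i (DFT_N x)[i] e^{2πi (d + iQ) ℓ / M}`. Expanding the DFT and
exchanging the sums, each phase splits as `e^{2πi ℓ d / M} · e^{2πi i (ℓ - j) / N}`, and
orthogonality of the `N`-th roots of unity keeps only `j ≡ ℓ (mod N)`, contributing `N · x[ℓ mod N]`.
-/

theorem IsPrimitiveRoot.geom_sum_zpow_eq_ite {K : Type*} [Field K] {ζ : K} {N : ℕ}
    (hζ : IsPrimitiveRoot ζ N) (t : ℤ) :
    ∑ i ∈ range N, (ζ ^ t) ^ i = if (N : ℤ) ∣ t then (N : K) else 0 := by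
  split_ifs with ht
  · simp [(hζ.zpow_eq_one_iff_dvd t).2 ht]
  · have hpow : (ζ ^ t) ^ N = 1 := by
      rw [← zpow_natCast, ← zpow_mul, mul_comm, zpow_mul, zpow_natCast, hζ.pow_eq_one, one_zpow]
    rw [geom_sum_eq (mt (hζ.zpow_eq_one_iff_dvd t).1 ht), hpow, sub_self, zero_div]

theorem sum_range_exp_two_pi_I_mul_div (N : ℕ) (t : ℤ) :
    ∑ i ∈ range N, exp (2 * Real.pi * I * t * i / N) = if (N : ℤ) ∣ t then (N : ℂ) else 0 := by
  rcases eq_or_ne N 0 with rfl | hN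
  · simp
  rw [← (Complex.isPrimitiveRoot_exp N hN).geom_sum_zpow_eq_ite t]
  refine sum_congr rfl fun i _ => ?_
  rw [← exp_int_mul, ← exp_nat_mul]
  ring_nf

theorem Nat.intCast_dvd_sub_iff_eq_mod {N j ℓ : ℕ} (hj : j < N) :
    (N : ℤ) ∣ ℓ - j ↔ j = ℓ % N := by
  rw [← Nat.modEq_iff_dvd, Nat.ModEq, Nat.mod_eq_of_lt hj]

theorem sum_range_mul_ite_mod_eq {M : Type*} [AddCommMonoid M] {Q d : ℕ} (hd : d < Q)
    (f : ℕ → M) (N : ℕ) :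
    ∑ k ∈ range (N * Q), (if k % Q = d then f k else 0) = ∑ i ∈ range N, f (d + i * Q) := by
  induction N with
  | zero => simp
  | succ N ih =>
    rw [Nat.succ_mul, sum_range_add, ih, sum_range_succ]
    congr 1
    calc ∑ r ∈ range Q, (if (N * Q + r) % Q = d then f (N * Q + r) else 0)
        = ∑ r ∈ range Q, if r = d then f (N * Q + r) else 0 :=
          sum_congr rfl fun r hr => by
            rw [Nat.mul_add_mod_self_right, Nat.mod_eq_of_lt (mem_range.1 hr)]
      _ = f (d + N * Q) := by rw [sum_ite_eq', if_pos (mem_range.2 hd), add_comm]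

theorem sum_range_mul_ite_dvd_sub {R : Type*} [Semiring R] {N : ℕ} (hN : 0 < N) (ℓ : ℕ)
    (x : ℕ → R) :
    ∑ j ∈ range N, x j * (if (N : ℤ) ∣ ℓ - j then (N : R) else 0) = x (ℓ % N) * N :=
  calc ∑ j ∈ range N, x j * (if (N : ℤ) ∣ ℓ - j then (N : R) else 0)
      = ∑ j ∈ range N, if ℓ % N = j then x j * N else 0 :=
        sum_congr rfl fun j hj => by
          rw [mul_ite, mul_zero, if_congr ((Nat.intCast_dvd_sub_iff_eq_mod (mem_range.1 hj)).trans
            eq_comm) rfl rfl]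
    _ = x (ℓ % N) * N := by rw [sum_ite_eq, if_pos (mem_range.2 (Nat.mod_lt ℓ hN))]

theorem idft_mul_of_spread_dft {N Q d : ℕ} (hd : d < Q) (x X : ℕ → ℂ)
    (hX : ∀ k < N * Q, X k = if k % Q = d then dft N x (k / Q) else 0) (ℓ : ℕ) :
    idft (N * Q) X ℓ =
      N / ((N * Q : ℕ) : ℂ) * exp (2 * Real.pi * I * ℓ * d / ((N * Q : ℕ) : ℂ)) * x (ℓ % N) := by
  rcases Nat.eq_zero_or_pos N with rfl | hN
  · simp [idft] -- both sides are junk zeros: `1 / 0 = 0` in `idft 0` and `0 / 0 = 0` on the right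
  have hQpos : 0 < Q := Nat.zero_lt_of_lt hd
  have hQ : (Q : ℂ) ≠ 0 := Nat.cast_ne_zero.2 hQpos.ne'
  have hN' : (N : ℂ) ≠ 0 := Nat.cast_ne_zero.2 hN.ne'
  set e := exp (2 * Real.pi * I * ℓ * d / ((N * Q : ℕ) : ℂ))
  have hphase : ∀ i j : ℕ, exp (-2 * Real.pi * I * i * j / N) *
      exp (2 * Real.pi * I * (d + i * Q : ℕ) * ℓ / (N * Q : ℕ)) =
        e * exp (2 * Real.pi * I * ((ℓ - j : ℤ) : ℂ) * i / N) := by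
    intro i j
    rw [← exp_add, ← exp_add]
    congr 1
    push_cast
    field_simp
    ring
  calc idft (N * Q) X ℓ
      = 1 / ((N * Q : ℕ) : ℂ) * ∑ i ∈ range N,
          dft N x i * exp (2 * Real.pi * I * (d + i * Q : ℕ) * ℓ / (N * Q : ℕ)) := by
        rw [idft]
        congr 1
        calc ∑ k ∈ range (N * Q), X k * exp (2 * Real.pi * I * k * ℓ / (N * Q : ℕ))
            = ∑ k ∈ range (N * Q), if k % Q = d then
                dft N x (k / Q) * exp (2 * Real.pi * I * k * ℓ / (N * Q : ℕ)) else 0 :=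
              sum_congr rfl fun k hk => by rw [hX k (mem_range.1 hk), ite_mul, zero_mul]
          _ = _ := by
              rw [sum_range_mul_ite_mod_eq hd]
              simp_rw [Nat.add_mul_div_right _ _ hQpos, Nat.div_eq_of_lt hd, zero_add]
    _ = 1 / ((N * Q : ℕ) : ℂ) * (e * ∑ j ∈ range N, x j *
          ∑ i ∈ range N, exp (2 * Real.pi * I * ((ℓ - j : ℤ) : ℂ) * i / N)) := by
        simp_rw [dft, sum_mul, mul_sum]
        rw [sum_comm]
        refine sum_congr rfl fun j _ => sum_congr rfl fun i _ => ?_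
        rw [mul_assoc (x j), hphase]
        ring
    _ = _ := by
        simp_rw [sum_range_exp_two_pi_I_mul_div, sum_range_mul_ite_dvd_sub hN]
        ring

theorem stmt0 (m n : ℕ) (hnm : n ≤ m) (d : ℕ) (hd : d < 2 ^ (m - n)) (x : ℕ → ℂ)
    (X : ℕ → ℂ)
    (hX : ∀ k < 2 ^ m, X k =
      if k % 2 ^ (m - n) = d then dft (2 ^ n) x (k / 2 ^ (m - n)) else 0) :
    ∀ ℓ < 2 ^ m,
      idft (2 ^ m) X ℓ =
        ((2 ^ n : ℂ) / (2 ^ m : ℂ)) *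
          Complex.exp (2 * Real.pi * Complex.I * ℓ * d / (2 ^ m : ℕ)) *
          x (ℓ % 2 ^ n) := by
  intro ℓ _
  have hM : 2 ^ m = 2 ^ n * 2 ^ (m - n) := by rw [← pow_add, Nat.add_sub_cancel' hnm]
  rw [hM] at hX
  rw [hM, idft_mul_of_spread_dft hd x X hX ℓ, ← hM]
  push_cast
  rfl
end

section
/- The composition of m nested stages of odd-even shuffles equals the m-bit bit-reversal permutation: define permutations σ_1,...,σ_m on {0,...,2^m−1} where σ_t acts independently on each block {c·2^{m−t+1},...,(c+1)·2^{m−t+1}−1} (for c = 0,...,2^{t−1}−1) as the odd-even shuffle of size 2^{m−t+1}. Then σ_m ∘ σ_{m−1} ∘ ... ∘ σ_1 = ρ_m, the m-bit bit-reversal map. -/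
/-- The odd-even shuffle of size `2^s`: offset `q` goes to `q/2` if `q` is even
and to `2^{s-1} + (q-1)/2` if `q` is odd. -/
def oddEvenShuffle (s q : ℕ) : ℕ :=
  if q % 2 = 0 then q / 2 else 2 ^ (s - 1) + (q - 1) / 2

/-- `sigmaStage m t` is the permutation `σ_t` of `{0,...,2^m-1}` that applies the
odd-even shuffle of size `2^{m-t+1}` independently within each contiguous block of
that size. -/
def sigmaStage (m t p : ℕ) : ℕ :=
  (p / 2 ^ (m - t + 1)) * 2 ^ (m - t + 1) + oddEvenShuffle (m - t + 1) (p % 2 ^ (m - t + 1))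

/-- `stages m t = σ_t ∘ σ_{t-1} ∘ ... ∘ σ_1`. -/
def stages (m : ℕ) : ℕ → ℕ → ℕ
  | 0, p => p
  | t + 1, p => sigmaStage m (t + 1) (stages m t p)

/-- `bitRev m k` is the `m`-bit bit-reversal of `k`. -/
def bitRev (m k : ℕ) : ℕ :=
  ∑ i ∈ Finset.range m, (k / 2 ^ i % 2) * 2 ^ (m - 1 - i)

lemma key (m : ℕ) : ∀ t ≤ m, ∀ p < 2 ^ m,
    stages m t p = (∑ i ∈ Finset.range t, (p / 2 ^ i % 2) * 2 ^ (m - 1 - i)) + p / 2 ^ t := by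
  intro t
  induction t with
  | zero => intro _ p _; simp [stages]
  | succ t ih =>
    intro ht p hp
    have ht' : t ≤ m := Nat.le_of_succ_le ht
    have hIH := ih ht' p hp
    set R : ℕ := ∑ i ∈ Finset.range t, (p / 2 ^ i % 2) * 2 ^ (m - 1 - i) with hR
    set h : ℕ := p / 2 ^ t with hh
    -- divisibility of R
    have hdvd : 2 ^ (m - t) ∣ R := by
      apply Finset.dvd_sum
      intro i hi
      have : m - t ≤ m - 1 - i := by
        have := Finset.mem_range.mp hi
        omega
      exact Dvd.dvd.mul_left (pow_dvd_pow 2 this) _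
    obtain ⟨k, hk⟩ := hdvd
    have hhlt : h < 2 ^ (m - t) := by
      rw [hh, Nat.div_lt_iff_lt_mul (Nat.pos_of_ne_zero (by positivity))]
      calc p < 2 ^ m := hp
        _ = 2 ^ (m - t) * 2 ^ t := by rw [← pow_add]; congr 1; omega
    have hexp : m - (t + 1) + 1 = m - t := by omega
    have hpos : 0 < 2 ^ (m - t) := Nat.pos_of_ne_zero (by positivity)
    have hmod : (R + h) % 2 ^ (m - t) = h := by
      rw [hk, Nat.mul_add_mod, Nat.mod_eq_of_lt hhlt]
    have hdiv : (R + h) / 2 ^ (m - t) = k := by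
      rw [hk, Nat.mul_add_div hpos, Nat.div_eq_of_lt hhlt, add_zero]
    have hstep : stages m (t + 1) p =
        R + oddEvenShuffle (m - t) h := by
      show sigmaStage m (t + 1) (stages m t p) = _
      rw [hIH]
      unfold sigmaStage
      rw [hexp, hmod, hdiv, hk]; ring
    rw [hstep, Finset.sum_range_succ]
    have hbit : p / 2 ^ t % 2 = h % 2 := by rw [hh]
    have hhalf : h / 2 = p / 2 ^ (t + 1) := by
      rw [hh, Nat.div_div_eq_div_mul, pow_succ]
    have hmt1 : m - t - 1 = m - 1 - t := by omega
    unfold oddEvenShuffle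
    rcases Nat.even_or_odd h with he | ho
    · have h2 : h % 2 = 0 := Nat.even_iff.mp he
      rw [if_pos h2, hbit, h2, hhalf]
      ring
    · have h2 : h % 2 = 1 := Nat.odd_iff.mp ho
      have hh2 : (h - 1) / 2 = h / 2 := by omega
      rw [if_neg (by omega), hbit, h2, hh2, hhalf, hmt1]
      ring
theorem stmt6 (m : ℕ) : ∀ p < 2 ^ m, stages m m p = bitRev m p := by
  intro p hp
  rw [key m m le_rfl p hp, Nat.div_eq_of_lt hp, add_zero, bitRev]
end

section
/- Correctness of the bit-reversal allocation algorithm: let M = 2^m, and suppose requests of sizes 2^{n_1} ≥ 2^{n_2} ≥ ... ≥ 2^{n_K} (sorted in descending order) satisfy Σ_{k=1}^{K} 2^{n_k} ≤ 2^m. Allocate contiguous bins greedily: request k receives bins {s_k, s_k+1, ..., s_k + 2^{n_k} − 1} where s_k = Σ_{j<k} 2^{n_j}. Then for every k, the image of request k's bins under the m-bit bit-reversal map ρ_m is an evenly spaced set of the form {d_k + j·2^{m−n_k} : j = 0,...,2^{n_k}−1} for some d_k, and the images for distinct requests are pairwise disjoint. -/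
/-!
Write the start of block `k` as `s = 2^t * q` with `t = n k`; this is possible because all
earlier blocks are at least as large. An offset `i < 2^t` inside the block then occupies the low
`t` bits while `q` occupies the high `m - t` bits, so bit reversal swaps the two halves:
`ρ_m(2^t q + i) = ρ_{m-t}(q) + ρ_t(i) · 2^{m-t}`. As `ρ_t` permutes `{0, …, 2^t - 1}`, the block
is sent onto the progression with offset `ρ_{m-t}(q)` and step `2^{m-t}`. Disjointness holds
because the blocks are disjoint subsets of `{0, …, 2^m - 1}`, on which `ρ_m` is an involution.
-/

open Finset

lemma bitRev_succ (m k : ℕ) : bitRev (m + 1) k = k % 2 * 2 ^ m + bitRev m (k / 2) := by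
  rw [bitRev, sum_range_succ', add_comm]
  congr 1
  · simp
  · refine sum_congr rfl fun i _ => ?_
    rw [Nat.div_div_eq_div_mul, ← pow_succ']
    congr 2
    omega

lemma bitRev_succ' (m k : ℕ) : bitRev (m + 1) k = k / 2 ^ m % 2 + 2 * bitRev m k := by
  simp only [bitRev]
  rw [sum_range_succ, mul_sum, add_comm]
  congr 1
  · simp
  · refine sum_congr rfl fun i hi => ?_
    rw [show m + 1 - 1 - i = m - 1 - i + 1 by rw [mem_range] at hi; omega, pow_succ]
    ring

lemma bitRev_lt (m k : ℕ) : bitRev m k < 2 ^ m := by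
  induction m generalizing k with
  | zero => simp [bitRev]
  | succ m ih =>
    have := ih (k / 2)
    rw [bitRev_succ, pow_succ]
    rcases Nat.mod_two_eq_zero_or_one k with h | h <;> rw [h] <;> omega

lemma bitRev_mod_two_pow (m k : ℕ) : bitRev m (k % 2 ^ m) = bitRev m k := by
  refine sum_congr rfl fun i hi => ?_
  rw [mem_range] at hi
  have : k % 2 ^ m / 2 ^ i = k / 2 ^ i % 2 ^ (m - i) := by
    rw [← Nat.mod_mul_right_div_self, ← pow_add, Nat.add_sub_cancel' hi.le]
  rw [this, Nat.mod_mod_of_dvd _ (dvd_pow_self 2 (by omega))]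

lemma bitRev_bitRev {m k : ℕ} (h : k < 2 ^ m) : bitRev m (bitRev m k) = k := by
  induction m generalizing k with
  | zero => simp_all [bitRev]
  | succ m ih =>
    have hr := bitRev_lt m (k / 2)
    have hdiv : (k % 2 * 2 ^ m + bitRev m (k / 2)) / 2 ^ m = k % 2 := by
      rw [mul_comm, Nat.mul_add_div (by positivity), Nat.div_eq_of_lt hr]
      omega
    have hmod : (k % 2 * 2 ^ m + bitRev m (k / 2)) % 2 ^ m = bitRev m (k / 2) := by
      rw [mul_comm, Nat.mul_add_mod, Nat.mod_eq_of_lt hr]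
    rw [bitRev_succ', bitRev_succ, hdiv, ← bitRev_mod_two_pow, hmod, ih (by omega)]
    omega

lemma bitRev_injOn (m : ℕ) : Set.InjOn (bitRev m) (Set.Iio (2 ^ m)) :=
  Set.LeftInvOn.injOn fun _ hk => bitRev_bitRev hk

lemma image_bitRev_range (t : ℕ) : (range (2 ^ t)).image (bitRev t) = range (2 ^ t) := by
  ext x
  simp only [mem_image, mem_range]
  exact ⟨fun ⟨a, _, ha⟩ => ha ▸ bitRev_lt t a,
    fun hx => ⟨bitRev t x, bitRev_lt t x, bitRev_bitRev hx⟩⟩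

lemma bitRev_two_pow_mul_add {t m a : ℕ} (b : ℕ) (ht : t ≤ m) (ha : a < 2 ^ t) :
    bitRev m (2 ^ t * b + a) = bitRev (m - t) b + bitRev t a * 2 ^ (m - t) := by
  induction t generalizing m a with
  | zero => simp_all [bitRev]
  | succ t ih =>
    obtain ⟨m, rfl⟩ : ∃ m', m = m' + 1 := ⟨m - 1, by omega⟩
    have hdiv : (2 ^ (t + 1) * b + a) / 2 = 2 ^ t * b + a / 2 := by
      rw [pow_succ', mul_assoc]; omega
    have hmod : (2 ^ (t + 1) * b + a) % 2 = a % 2 := by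
      rw [pow_succ', mul_assoc]; omega
    rw [bitRev_succ, hdiv, hmod, ih (by omega) (by rw [pow_succ] at ha; omega), bitRev_succ,
      Nat.add_sub_add_right, add_mul, mul_assoc, ← pow_add, Nat.add_sub_cancel' (by omega)]
    ring

lemma image_bitRev_two_pow_mul_add {t m : ℕ} (q : ℕ) (ht : t ≤ m) :
    (range (2 ^ t)).image (fun i => bitRev m (2 ^ t * q + i)) =
      (range (2 ^ t)).image (fun j => bitRev (m - t) q + j * 2 ^ (m - t)) := by
  conv_rhs => rw [← image_bitRev_range t, image_image]
  exact image_congr fun i hi => bitRev_two_pow_mul_add q ht (mem_range.1 hi)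

lemma disjoint_image_bitRev_add {m a b A B : ℕ} (hab : a + A ≤ b) (hb : b + B ≤ 2 ^ m) :
    Disjoint ((range A).image fun i => bitRev m (a + i))
      ((range B).image fun i => bitRev m (b + i)) := by
  simp only [disjoint_left, mem_image, mem_range]
  rintro _ ⟨i, hi, rfl⟩ ⟨j, hj, h⟩
  have := bitRev_injOn m (Set.mem_Iio.2 (by omega)) (Set.mem_Iio.2 (by omega)) h
  omega

section PartialSums

variable {ι : Type*} [Fintype ι] [LinearOrder ι]

lemma sum_filter_lt_add (f : ι → ℕ) (k : ι) :
    ∑ j ∈ univ.filter (· < k), f j + f k = ∑ j ∈ univ.filter (· ≤ k), f j := by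
  rw [add_comm, ← sum_insert (by simp)]
  congr 1
  ext j
  simp [le_iff_lt_or_eq, or_comm]

lemma sum_filter_lt_add_le_of_lt (f : ι → ℕ) {k k' : ι} (h : k < k') :
    ∑ j ∈ univ.filter (· < k), f j + f k ≤ ∑ j ∈ univ.filter (· < k'), f j := by
  rw [sum_filter_lt_add]
  exact sum_le_sum_of_subset fun j hj => by
    simp only [mem_filter, mem_univ, true_and] at hj ⊢
    exact hj.trans_lt h

lemma sum_filter_lt_add_le_sum (f : ι → ℕ) (k : ι) :
    ∑ j ∈ univ.filter (· < k), f j + f k ≤ ∑ j, f j := by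
  rw [sum_filter_lt_add]
  exact sum_le_sum_of_subset (subset_univ _)

lemma two_pow_dvd_sum_filter_lt {n : ι → ℕ} (hn : Antitone n) (k : ι) :
    2 ^ n k ∣ ∑ j ∈ univ.filter (· < k), 2 ^ n j :=
  dvd_sum fun j hj => pow_dvd_pow 2 (hn (mem_filter.1 hj).2.le)

end PartialSums

/-- Correctness of the bit-reversal allocation algorithm: requests of sizes
`2^{n 1} ≥ … ≥ 2^{n K}` are greedily given contiguous bins starting at the partial
sums `s k`; the image of each request's bins under the `m`-bit bit-reversal is an
evenly spaced set with spacing `2^{m - n k}`, and the images are pairwise disjoint. -/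
theorem stmt10 (m K : ℕ) (n : Fin K → ℕ) (hn : ∀ k, n k ≤ m)
    (hsorted : ∀ j k : Fin K, j ≤ k → n k ≤ n j)
    (hsum : ∑ k : Fin K, 2 ^ (n k) ≤ 2 ^ m)
    (s : Fin K → ℕ) (hs : ∀ k, s k = ∑ j ∈ Finset.univ.filter (· < k), 2 ^ (n j)) :
    (∀ k : Fin K, ∃ d : ℕ, d < 2 ^ (m - n k) ∧
      (Finset.range (2 ^ (n k))).image (fun i => bitRev m (s k + i)) =
        (Finset.range (2 ^ (n k))).image (fun j => d + j * 2 ^ (m - n k))) ∧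
    (∀ k k' : Fin K, k ≠ k' →
      Disjoint ((Finset.range (2 ^ (n k))).image (fun i => bitRev m (s k + i)))
        ((Finset.range (2 ^ (n k'))).image (fun i => bitRev m (s k' + i)))) := by
  simp only [hs]
  refine ⟨fun k => ?_, fun k k' hne => ?_⟩
  · obtain ⟨q, hq⟩ := two_pow_dvd_sum_filter_lt hsorted k
    exact ⟨_, bitRev_lt _ q, hq ▸ image_bitRev_two_pow_mul_add q (hn k)⟩
  · wlog h : k < k' generalizing k k'
    · exact (this k' k hne.symm (hne.symm.lt_of_le (not_lt.1 h))).symm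
    exact disjoint_image_bitRev_add (sum_filter_lt_add_le_of_lt _ h)
      ((sum_filter_lt_add_le_sum _ k').trans hsum)
end

section
/- Orthogonality of distinct IFDMA streams: let M = 2^m, and consider two IFDMA streams with parameters (N_1, d_1) and (N_2, d_2), N_i = 2^{n_i}, 0 ≤ d_i < M/N_i, whose subcarrier sets S_i = {d_i + j·M/N_i : j = 0,...,N_i−1} are disjoint. Then for arbitrary symbol blocks x_1 ∈ ℂ^{N_1}, x_2 ∈ ℂ^{N_2}, the time-domain signals x'_1[ℓ] = (N_1/M)e^{2πiℓd_1/M}x_1[ℓ mod N_1] and x'_2[ℓ] = (N_2/M)e^{2πiℓd_2/M}x_2[ℓ mod N_2] are orthogonal: Σ_{ℓ=0}^{M−1} x'_1[ℓ]·conj(x'_2[ℓ]) = 0. -/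
/-!
Put `N = 2 ^ max n₁ n₂`, `K = M / N` and `ζ = e^{2πi(d₁ - d₂)/M}`. The product
`x₁[ℓ mod N₁] · conj x₂[ℓ mod N₂]` is `N`-periodic, so writing `ℓ = a + N b` factors the sum
through the geometric sum `∑_{b < K} (ζ^N)^b`. Now `ζ^N` is a `K`-th root of unity, and it is
not `1`, because `d₁ ≡ d₂ (mod K)` would put the offset of the stream with fewer subcarriers
into both subcarrier sets.
-/

open Finset Function

theorem sum_range_mul_pow_mul_of_periodic {R : Type*} [CommSemiring R] (ζ : R) {h : ℕ → R}
    {N : ℕ} (hper : Periodic h N) (K : ℕ) :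
    ∑ ℓ ∈ range (N * K), ζ ^ ℓ * h ℓ =
      (∑ b ∈ range K, (ζ ^ N) ^ b) * ∑ a ∈ range N, ζ ^ a * h a := by
  induction K with
  | zero => simp
  | succ K ih =>
    have hshift (a : ℕ) : ζ ^ (N * K + a) * h (N * K + a) = (ζ ^ N) ^ K * (ζ ^ a * h a) := by
      have hh : h (a + K * N) = h a := by simpa only [Nat.cast_id] using hper.nat_mul K a
      rw [add_comm, mul_comm N K, hh, pow_add, pow_mul']; ring
    rw [mul_add_one, sum_range_add, ih, sum_range_succ, add_mul]
    simp only [hshift, ← mul_sum]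

theorem geom_sum_eq_zero_of_pow_eq_one {R : Type*} [CommRing R] [IsDomain R] {w : R} {K : ℕ}
    (hK : w ^ K = 1) (hw : w ≠ 1) : ∑ b ∈ range K, w ^ b = 0 := by
  have := geom_sum_mul w K
  rw [hK, sub_self] at this
  exact (mul_eq_zero.mp this).resolve_right (sub_ne_zero.mpr hw)

theorem IsPrimitiveRoot.sum_zpow_pow_mul_of_periodic_eq_zero {F : Type*} [Field F] {ω : F}
    {N K : ℕ} (hω : IsPrimitiveRoot ω (N * K)) {t : ℤ} (ht : ¬ (K : ℤ) ∣ t) {h : ℕ → F}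
    (hper : Periodic h N) : ∑ ℓ ∈ range (N * K), (ω ^ t) ^ ℓ * h ℓ = 0 := by
  rcases Nat.eq_zero_or_pos (N * K) with hNK | hNK
  · simp [hNK]
  have hμ : IsPrimitiveRoot (ω ^ N) K := hω.pow hNK rfl
  have hroot : ((ω ^ t) ^ N) ^ K = 1 := by
    rw [← pow_mul, ← zpow_natCast, ← zpow_mul, mul_comm, zpow_mul, zpow_natCast, hω.pow_eq_one,
      one_zpow]
  have hne : (ω ^ t) ^ N ≠ 1 := by
    rwa [← zpow_natCast, ← zpow_mul, mul_comm, zpow_mul, zpow_natCast, Ne, hμ.zpow_eq_one_iff_dvd]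
  rw [sum_range_mul_pow_mul_of_periodic _ hper, geom_sum_eq_zero_of_pow_eq_one hroot hne,
    zero_mul]

theorem mem_image_add_mul_of_modEq {d₁ d₂ K N : ℕ} (hd₂ : d₂ < K) (hd₁ : d₁ < K * N)
    (h : d₁ ≡ d₂ [MOD K]) : d₁ ∈ (range N).image (fun j => d₂ + j * K) := by
  refine mem_image.mpr ⟨d₁ / K, mem_range.mpr (Nat.div_lt_of_lt_mul hd₁), ?_⟩
  rw [← Nat.mod_eq_of_lt hd₂, ← h, Nat.mod_add_div']

theorem exp_mul_conj_exp (M ℓ d₁ d₂ : ℕ) :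
    Complex.exp (2 * Real.pi * Complex.I * ℓ * d₁ / M) *
        starRingEnd ℂ (Complex.exp (2 * Real.pi * Complex.I * ℓ * d₂ / M)) =
      (Complex.exp (2 * Real.pi * Complex.I / M) ^ ((d₁ : ℤ) - d₂)) ^ ℓ := by
  rw [← Complex.exp_conj, ← Complex.exp_add, ← zpow_natCast, ← zpow_mul, ← Complex.exp_int_mul]
  congr 1
  simp only [map_mul, map_div₀, Complex.conj_ofReal, Complex.conj_I, map_natCast, map_ofNat]
  push_cast
  ring

theorem periodic_comp_mod_of_dvd {α : Type*} (f : ℕ → α) {a N : ℕ} (h : a ∣ N) :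
    Periodic (fun ℓ => f (ℓ % a)) N := by
  obtain ⟨c, rfl⟩ := h
  intro ℓ
  simp only [Nat.add_mul_mod_self_left]

def subcarriers (m n d : ℕ) : Finset ℕ :=
  (range (2 ^ n)).image (fun j => d + j * 2 ^ (m - n))

theorem not_modEq_of_disjoint_subcarriers {m n₁ n₂ d₁ d₂ : ℕ} (h₂ : n₂ ≤ m) (hd₁ : d₁ < 2 ^ m)
    (hd₂ : d₂ < 2 ^ (m - n₂)) (hdisj : Disjoint (subcarriers m n₁ d₁) (subcarriers m n₂ d₂)) :
    ¬ d₁ ≡ d₂ [MOD 2 ^ (m - n₂)] := by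
  intro h
  have hd₁_mem₁ : d₁ ∈ subcarriers m n₁ d₁ := mem_image.mpr ⟨0, by simp, by simp⟩
  have hd₁_mem₂ : d₁ ∈ subcarriers m n₂ d₂ :=
    mem_image_add_mul_of_modEq hd₂ (by rwa [← pow_add, Nat.sub_add_cancel h₂]) h
  exact disjoint_left.mp hdisj hd₁_mem₁ hd₁_mem₂

theorem stmt13 (m n₁ n₂ : ℕ) (h₁ : n₁ ≤ m) (h₂ : n₂ ≤ m)
    (d₁ d₂ : ℕ) (hd₁ : d₁ < 2 ^ (m - n₁)) (hd₂ : d₂ < 2 ^ (m - n₂))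
    (hdisj : Disjoint
      ((Finset.range (2 ^ n₁)).image (fun j => d₁ + j * 2 ^ (m - n₁)))
      ((Finset.range (2 ^ n₂)).image (fun j => d₂ + j * 2 ^ (m - n₂))))
    (x₁ x₂ : ℕ → ℂ) :
    ∑ ℓ ∈ Finset.range (2 ^ m),
      (((2 ^ n₁ : ℂ) / (2 ^ m : ℂ)) *
          Complex.exp (2 * Real.pi * Complex.I * ℓ * d₁ / ((2 ^ m : ℕ) : ℂ)) *
          x₁ (ℓ % 2 ^ n₁)) *
        (starRingEnd ℂ)
          (((2 ^ n₂ : ℂ) / (2 ^ m : ℂ)) *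
            Complex.exp (2 * Real.pi * Complex.I * ℓ * d₂ / ((2 ^ m : ℕ) : ℂ)) *
            x₂ (ℓ % 2 ^ n₂)) = 0 := by
  set n := max n₁ n₂
  have hM : 2 ^ m = 2 ^ n * 2 ^ (m - n) := by rw [← pow_add]; congr 1; omega
  have hω : IsPrimitiveRoot (Complex.exp (2 * Real.pi * Complex.I / ((2 ^ m : ℕ) : ℂ)))
      (2 ^ n * 2 ^ (m - n)) := hM ▸ Complex.isPrimitiveRoot_exp _ (by positivity)
  have hpow_sub_le (k : ℕ) : 2 ^ (m - k) ≤ 2 ^ m := Nat.pow_le_pow_right two_pos (Nat.sub_le m k)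
  have hmod : ¬ d₂ ≡ d₁ [MOD 2 ^ (m - n)] := by
    rcases max_choice n₁ n₂ with hn | hn
    · rw [show n = n₁ from hn]
      exact not_modEq_of_disjoint_subcarriers h₁ (hd₂.trans_le (hpow_sub_le n₂)) hd₁ hdisj.symm
    · rw [show n = n₂ from hn]
      exact fun h =>
        not_modEq_of_disjoint_subcarriers h₂ (hd₁.trans_le (hpow_sub_le n₁)) hd₂ hdisj h.symm
  have hper : Periodic (fun ℓ => x₁ (ℓ % 2 ^ n₁) * starRingEnd ℂ (x₂ (ℓ % 2 ^ n₂))) (2 ^ n) :=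
    (periodic_comp_mod_of_dvd x₁ (pow_dvd_pow 2 (le_max_left n₁ n₂))).mul
      (periodic_comp_mod_of_dvd (starRingEnd ℂ ∘ x₂) (pow_dvd_pow 2 (le_max_right n₁ n₂)))
  rw [congrArg range hM, ← mul_zero ((2 ^ n₁ : ℂ) / 2 ^ m * starRingEnd ℂ (2 ^ n₂ / 2 ^ m)),
    ← hω.sum_zpow_pow_mul_of_periodic_eq_zero (mt Nat.modEq_iff_dvd.mpr hmod) hper, mul_sum]
  refine sum_congr rfl fun ℓ _ => ?_
  rw [← exp_mul_conj_exp, map_mul, map_mul]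
  ring
end

section
/- Two evenly spaced subcarrier sets {d_1 + j·M/N_1 : j ∈ [N_1]} and {d_2 + j·M/N_2 : j ∈ [N_2]} in {0,...,M−1}, with N_i = 2^{n_i} dividing M = 2^m, 0 ≤ d_i < M/N_i, and n_1 ≥ n_2, are disjoint if and only if d_2 mod (M/N_1) ≠ d_1. -/
theorem stmt14 (m n₁ n₂ : ℕ) (h₁ : n₁ ≤ m) (h₂₁ : n₂ ≤ n₁)
    (d₁ d₂ : ℕ) (hd₁ : d₁ < 2 ^ (m - n₁)) (hd₂ : d₂ < 2 ^ (m - n₂)) :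
    Disjoint
      ((Finset.range (2 ^ n₁)).image (fun j => d₁ + j * 2 ^ (m - n₁)))
      ((Finset.range (2 ^ n₂)).image (fun j => d₂ + j * 2 ^ (m - n₂))) ↔
    d₂ % 2 ^ (m - n₁) ≠ d₁ := by
  set p := 2 ^ (m - n₁) with hp
  set q := 2 ^ (m - n₂) with hq
  have hpq : p ∣ q := pow_dvd_pow 2 (by omega)
  have hp0 : 0 < p := pow_pos (by norm_num) _
  constructor
  · intro hdisj
    intro hEq
    -- d₂ is in both sets
    have hA : d₂ ∈ (Finset.range (2 ^ n₁)).image (fun j => d₁ + j * p) := by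
      refine Finset.mem_image.mpr ⟨d₂ / p, ?_, ?_⟩
      · refine Finset.mem_range.mpr ?_
        have : d₂ / p < q / p := Nat.div_lt_div_of_lt_of_dvd hpq hd₂
        have hqp : q / p = 2 ^ (n₁ - n₂) := by
          rw [hp, hq, Nat.pow_div (by omega) (by norm_num)]
          congr 1; omega
        calc d₂ / p < 2 ^ (n₁ - n₂) := by rw [← hqp]; exact this
          _ ≤ 2 ^ n₁ := Nat.pow_le_pow_right (by norm_num) (by omega)
      · rw [← hEq]
        exact Nat.mod_add_div' d₂ p
    have hB : d₂ ∈ (Finset.range (2 ^ n₂)).image (fun j => d₂ + j * q) := by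
      refine Finset.mem_image.mpr ⟨0, Finset.mem_range.mpr (pow_pos (by norm_num) _), by simp⟩
    exact (Finset.disjoint_left.mp hdisj hA) hB
  · intro hne
    rw [Finset.disjoint_left]
    rintro x hA hB
    obtain ⟨j, -, hj⟩ := Finset.mem_image.mp hA
    obtain ⟨k, -, hk⟩ := Finset.mem_image.mp hB
    apply hne
    have h1 : x % p = d₁ := by
      rw [← hj, Nat.add_mul_mod_self_right, Nat.mod_eq_of_lt hd₁]
    have h2 : x % p = d₂ % p := by
      obtain ⟨c, hc⟩ := hpq
      rw [← hk, hc, show k * (p * c) = k * c * p from by ring, Nat.add_mul_mod_self_right]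
    omega
end
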